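/- Let W be a bipartite graph with bipartition (V₁, V₀) and vertex weights 1 on V₁ and 0 on V₀, let ε ≥ 0, and let Q be a u–v path in W satisfying ℓ(Q) ≤ (1+ε)·ℓ_W(u,v). Then c(Q) ≤ (1+ε)·d_W(u,v). That is, in a map-weighted graph, a path that is a (1+ε)-approximate shortest path with respect to the number of edges is also a (1+ε)-approximate shortest path with respect to total vertex weight. -/

import Mathlib

/-!
Along an edge of a bipartite graph with weights `1` on one side and `0` on the other the two
endpoint weights add up to `1`, so every walk `p` from `u` to `v` satisfies
`2 c(p) = ℓ(p) + w u + w v`. Hence a shortest path is also a cheapest one, and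
`2 d(u,v) = ℓ(u,v) + w u + w v`. Multiplying the length bound for `Q` by `1 + ε` therefore
gives the cost bound, up to the term `ε (w u + w v) ≥ 0`.
-/

/-- The cost of a walk: the sum of the vertex weights over its support
(including both endpoints). -/
def walkCost {V : Type*} {G : SimpleGraph V} (w : V → ℕ) {u v : V}
    (p : G.Walk u v) : ℕ :=
  (p.support.map w).sum

/-- `ℓ_W(u,v)`: the minimum number of edges of a `u`–`v` path in `G`. -/
noncomputable def edgeDist {V : Type*} (G : SimpleGraph V) (u v : V) : ℕ :=
  sInf {n : ℕ | ∃ p : G.Walk u v, p.IsPath ∧ p.length = n}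

/-- `d_W(u,v)`: the minimum total vertex weight of a `u`–`v` path in `G`
(weights of both endpoints included). -/
noncomputable def weightDist {V : Type*} (G : SimpleGraph V) (w : V → ℕ)
    (u v : V) : ℕ :=
  sInf {n : ℕ | ∃ p : G.Walk u v, p.IsPath ∧ walkCost w p = n}

namespace SimpleGraph

variable {V : Type*} {G : SimpleGraph V} {w : V → ℕ} {u v : V}

lemma walkCost_cons {a b c : V} (h : G.Adj a b) (p : G.Walk b c) :
    walkCost w (Walk.cons h p) = w a + walkCost w p := by
  simp [walkCost]

lemma weight_add_weight_eq_one_of_adj (V₁ : Set V)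
    (hbip : ∀ x y, G.Adj x y → (x ∈ V₁ ↔ y ∉ V₁))
    (hw1 : ∀ x ∈ V₁, w x = 1) (hw0 : ∀ x ∉ V₁, w x = 0)
    {x y : V} (h : G.Adj x y) : w x + w y = 1 := by
  by_cases hx : x ∈ V₁
  · rw [hw1 x hx, hw0 y ((hbip x y h).mp hx)]
  · have hy : y ∈ V₁ := not_not.mp fun hy => hx ((hbip x y h).mpr hy)
    rw [hw0 x hx, hw1 y hy]

section UnitEdgeWeight

variable (hadj : ∀ x y, G.Adj x y → w x + w y = 1)
include hadj

lemma two_mul_walkCost (p : G.Walk u v) : 2 * walkCost w p = p.length + w u + w v := by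
  induction p with
  | nil => simp [walkCost, two_mul]
  | cons h q ih =>
    rw [walkCost_cons, Walk.length_cons]
    have := hadj _ _ h
    omega

lemma walkCost_le_walkCost_of_length_le {p q : G.Walk u v} (hpq : p.length ≤ q.length) :
    walkCost w p ≤ walkCost w q := by
  have hp := two_mul_walkCost hadj p
  have hq := two_mul_walkCost hadj q
  omega

end UnitEdgeWeight

lemma exists_isPath_length_eq_edgeDist (h : G.Reachable u v) :
    ∃ p : G.Walk u v, p.IsPath ∧ p.length = edgeDist G u v := by
  obtain ⟨q, hq⟩ := h.exists_isPath
  exact Nat.sInf_mem (s := {n | ∃ p : G.Walk u v, p.IsPath ∧ p.length = n}) ⟨_, q, hq, rfl⟩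

lemma edgeDist_le_length {p : G.Walk u v} (hp : p.IsPath) : edgeDist G u v ≤ p.length :=
  Nat.sInf_le ⟨p, hp, rfl⟩

lemma weightDist_eq_walkCost_of_length_eq_edgeDist
    (hadj : ∀ x y, G.Adj x y → w x + w y = 1) {P : G.Walk u v} (hP : P.IsPath)
    (hPl : P.length = edgeDist G u v) : weightDist G w u v = walkCost w P := by
  refine le_antisymm (Nat.sInf_le ⟨P, hP, rfl⟩) (le_csInf ⟨_, P, hP, rfl⟩ ?_)
  rintro _ ⟨p, hp, rfl⟩
  exact walkCost_le_walkCost_of_length_le hadj (hPl ▸ edgeDist_le_length hp)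

lemma two_mul_weightDist (hadj : ∀ x y, G.Adj x y → w x + w y = 1) (h : G.Reachable u v) :
    2 * weightDist G w u v = edgeDist G u v + w u + w v := by
  obtain ⟨P, hP, hPl⟩ := exists_isPath_length_eq_edgeDist h
  rw [weightDist_eq_walkCost_of_length_eq_edgeDist hadj hP hPl, two_mul_walkCost hadj, hPl]

end SimpleGraph

theorem approx_shortest_length_to_approx_shortest_cost_general
    {V : Type*} (G : SimpleGraph V) (V₁ : Set V)
    (hbip : ∀ x y, G.Adj x y → (x ∈ V₁ ↔ y ∉ V₁))
    (w : V → ℕ) (hw1 : ∀ x ∈ V₁, w x = 1) (hw0 : ∀ x ∉ V₁, w x = 0)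
    (ε : ℝ) (hε : 0 ≤ ε)
    {u v : V} (Q : G.Walk u v)
    (hshort : (Q.length : ℝ) ≤ (1 + ε) * (edgeDist G u v : ℝ)) :
    (walkCost w Q : ℝ) ≤ (1 + ε) * (weightDist G w u v : ℝ) := by
  have hadj : ∀ x y, G.Adj x y → w x + w y = 1 :=
    fun _ _ => SimpleGraph.weight_add_weight_eq_one_of_adj V₁ hbip hw1 hw0
  have hcostQ : (2 * walkCost w Q : ℝ) = Q.length + (w u + w v) := by
    exact_mod_cast (SimpleGraph.two_mul_walkCost hadj Q).trans (add_assoc _ _ _)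
  have hdist : (2 * weightDist G w u v : ℝ) = edgeDist G u v + (w u + w v) := by
    exact_mod_cast (SimpleGraph.two_mul_weightDist hadj Q.reachable).trans (add_assoc _ _ _)
  have hk : (0 : ℝ) ≤ w u + w v := by positivity
  nlinarith [mul_nonneg hε hk]

/-- In a map-weighted (bipartite, 0/1 node-weighted) graph,
a path that is a `(1+ε)`-approximate shortest path with respect to the
number of edges is also a `(1+ε)`-approximate shortest path with respect
to total vertex weight. -/
theorem approx_shortest_length_to_approx_shortest_cost
    {V : Type*} (G : SimpleGraph V) (V₁ : Set V)
    (hbip : ∀ x y, G.Adj x y → (x ∈ V₁ ↔ y ∉ V₁))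
    (w : V → ℕ) (hw1 : ∀ x ∈ V₁, w x = 1) (hw0 : ∀ x ∉ V₁, w x = 0)
    (ε : ℝ) (hε : 0 ≤ ε)
    {u v : V} (Q : G.Walk u v) (hQ : Q.IsPath)
    (hshort : (Q.length : ℝ) ≤ (1 + ε) * (edgeDist G u v : ℝ)) :
    (walkCost w Q : ℝ) ≤ (1 + ε) * (weightDist G w u v : ℝ) :=
  approx_shortest_length_to_approx_shortest_cost_general G V₁ hbip w hw1 hw0 ε hε Q hshort
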